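/- Let (V, E, s, t) be a finite directed multigraph with V nonempty whose underlying undirected graph is connected, let n ≥ 1, let u : E → ℚ^n, set g := #E − #V + 1, and let W := {a : E → ℚ | for every c ∈ ker ∂, ∑_{e ∈ E} (c e)·(a e) • (u e) = 0 in ℚ^n}. Then: (1) if g = 0 then W = (E → ℚ), i.e. codim W = 0 = n·g; (2) if n = 1 and u e ≠ 0 for every e ∈ E, then codim W = g. In both cases the corresponding tropical curves are non-superabundant. -/
import Mathlib


open scoped Classical

/-- The underlying undirected graph of the directed multigraph `(V, E, s, t)` is connected:
any two vertices are joined by a chain of edges traversed in either direction. -/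
def GraphConnected {V E : Type*} (s t : E → V) : Prop :=
  ∀ v w : V, Relation.ReflTransGen
    (fun x y => ∃ e, s e = x ∧ t e = y ∨ s e = y ∧ t e = x) v w

/-- The boundary map `∂ : (E → ℚ) → (V → ℚ)`,
`(∂ a) v = (∑ edges ending at v) − (∑ edges starting at v)`. -/
noncomputable def boundaryMap {V E : Type*} [Fintype E] (s t : E → V) :
    (E → ℚ) →ₗ[ℚ] (V → ℚ) where
  toFun a := fun v => (∑ e ∈ Finset.univ.filter fun e => t e = v, a e)
      - (∑ e ∈ Finset.univ.filter fun e => s e = v, a e)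
  map_add' a b := by
    funext v
    simp only [Pi.add_apply, Finset.sum_add_distrib]
    ring
  map_smul' c a := by
    funext v
    simp only [Pi.smul_apply, smul_eq_mul, ← Finset.mul_sum, RingHom.id_apply]
    ring

/-- For a fixed cycle `c`, the linear map `a ↦ ∑ e, (c e * a e) • u e`. -/
noncomputable def cyclePairing {E : Type*} [Fintype E] {n : ℕ} (u : E → Fin n → ℚ)
    (c : E → ℚ) : (E → ℚ) →ₗ[ℚ] (Fin n → ℚ) where
  toFun a := ∑ e : E, (c e * a e) • u e
  map_add' a b := by
    simp [mul_add, add_smul, Finset.sum_add_distrib]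
  map_smul' r a := by
    simp [Finset.smul_sum, smul_smul, mul_left_comm]

/-- The subspace `W = {a : E → ℚ | ∀ c ∈ ker ∂, ∑ e, (c e * a e) • u e = 0}`. -/
noncomputable def Wsub {V E : Type*} [Fintype E] {n : ℕ} (s t : E → V)
    (u : E → Fin n → ℚ) : Submodule ℚ (E → ℚ) :=
  ⨅ c ∈ LinearMap.ker (boundaryMap s t), LinearMap.ker (cyclePairing u c)


section Aux
set_option linter.unusedSectionVars false

variable {V E : Type*} [Fintype V] [Fintype E]

/-- The "sum of coordinates" functional. -/
noncomputable def sumFun (V : Type*) [Fintype V] : (V → ℚ) →ₗ[ℚ] ℚ :=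
  ∑ v : V, LinearMap.proj v

lemma sumFun_apply (f : V → ℚ) : sumFun V f = ∑ v : V, f v := by
  simp [sumFun]

lemma boundaryMap_single (s t : E → V) (e : E) :
    boundaryMap s t (Pi.single e 1) =
      Pi.single (t e) 1 - Pi.single (s e) 1 := by
  funext v
  simp only [boundaryMap, LinearMap.coe_mk, AddHom.coe_mk, Pi.sub_apply,
    Pi.single_apply, Finset.sum_ite_eq', Finset.mem_filter, Finset.mem_univ,
    true_and]
  by_cases h1 : t e = v <;> by_cases h2 : s e = v <;>
    simp [h1, h2, @eq_comm _ v]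

lemma single_sub_mem_range (s t : E → V) (hconn : GraphConnected s t)
    (v w : V) :
    (Pi.single w 1 - Pi.single v 1 : V → ℚ) ∈ LinearMap.range (boundaryMap s t) := by
  induction hconn v w with
  | refl => simp
  | tail _ hxy ih =>
    rename_i x y _
    obtain ⟨e, he | he⟩ := hxy
    · have h1 : boundaryMap s t (Pi.single e 1)
          = Pi.single y 1 - Pi.single x 1 := by
        rw [boundaryMap_single, he.1, he.2]
      have : (Pi.single y 1 - Pi.single v 1 : V → ℚ)
          = (Pi.single y 1 - Pi.single x 1) + (Pi.single x 1 - Pi.single v 1) := by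
        abel
      rw [this, ← h1]
      exact Submodule.add_mem _ (LinearMap.mem_range_self _ _) ih
    · have h1 : boundaryMap s t (Pi.single e 1)
          = Pi.single x 1 - Pi.single y 1 := by
        rw [boundaryMap_single, he.1, he.2]
      have : (Pi.single y 1 - Pi.single v 1 : V → ℚ)
          = -(Pi.single x 1 - Pi.single y 1) + (Pi.single x 1 - Pi.single v 1) := by
        abel
      rw [this, ← h1]
      exact Submodule.add_mem _ (Submodule.neg_mem _ (LinearMap.mem_range_self _ _)) ih

lemma range_boundary (s t : E → V) [Nonempty V] (hconn : GraphConnected s t) :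
    LinearMap.range (boundaryMap s t) = LinearMap.ker (sumFun V) := by
  apply le_antisymm
  · rintro _ ⟨a, rfl⟩
    rw [LinearMap.mem_ker, sumFun_apply]
    simp only [boundaryMap, LinearMap.coe_mk, AddHom.coe_mk]
    have key : ∀ (r : E → V),
        ∑ v : V, ∑ e ∈ Finset.univ.filter (fun e => r e = v), a e = ∑ e : E, a e := by
      intro r
      simp only [Finset.sum_filter]
      rw [Finset.sum_comm]
      simp [Finset.sum_ite_eq]
    rw [Finset.sum_sub_distrib, key, key, sub_self]
  · intro f hf
    rw [LinearMap.mem_ker, sumFun_apply] at hf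
    obtain ⟨v₀⟩ := ‹Nonempty V›
    have hrepr : f = ∑ w : V, f w • (Pi.single w 1 - Pi.single v₀ 1 : V → ℚ) := by
      have : ∑ w : V, f w • (Pi.single w 1 - Pi.single v₀ 1 : V → ℚ)
          = ∑ w : V, Pi.single w (f w) - (∑ w : V, f w) • (Pi.single v₀ 1 : V → ℚ) := by
        rw [Finset.sum_smul, ← Finset.sum_sub_distrib]
        refine Finset.sum_congr rfl fun w _ => ?_
        rw [smul_sub]
        congr 1
        funext x
        simp [Pi.single_apply]
      rw [this, hf, Finset.univ_sum_single, zero_smul, sub_zero]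
    rw [hrepr]
    exact Submodule.sum_mem _ fun w _ =>
      Submodule.smul_mem _ _ (single_sub_mem_range s t hconn v₀ w)

lemma finrank_ker_boundary (s t : E → V) [Nonempty V] (hconn : GraphConnected s t)
    (g : ℕ) (hg : g + Fintype.card V = Fintype.card E + 1) :
    Module.finrank ℚ (LinearMap.ker (boundaryMap s t)) = g := by
  have hsurj : Function.Surjective (sumFun V) := by
    intro r
    obtain ⟨v₀⟩ := ‹Nonempty V›
    exact ⟨Pi.single v₀ r, by rw [sumFun_apply]; simp⟩
  have h1 : Module.finrank ℚ (LinearMap.range (sumFun V))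
      + Module.finrank ℚ (LinearMap.ker (sumFun V)) = Fintype.card V := by
    rw [LinearMap.finrank_range_add_finrank_ker, Module.finrank_fintype_fun_eq_card]
  rw [LinearMap.range_eq_top.mpr hsurj, finrank_top, Module.finrank_self] at h1
  have h2 : Module.finrank ℚ (LinearMap.range (boundaryMap s t))
      + Module.finrank ℚ (LinearMap.ker (boundaryMap s t)) = Fintype.card E := by
    rw [LinearMap.finrank_range_add_finrank_ker, Module.finrank_fintype_fun_eq_card]
  rw [range_boundary s t hconn] at h2
  omega

/-- `a ↦ (c ↦ ∑ e, c e * a e * u0 e)` as a map to the dual of `K`. -/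
noncomputable def pairDual (u0 : E → ℚ) (K : Submodule ℚ (E → ℚ)) :
    (E → ℚ) →ₗ[ℚ] Module.Dual ℚ K where
  toFun a :=
    { toFun := fun c => ∑ e : E, (c : E → ℚ) e * a e * u0 e
      map_add' := fun c d => by
        simp [add_mul, Finset.sum_add_distrib]
      map_smul' := fun r c => by
        simp only [Submodule.coe_smul, Pi.smul_apply, smul_eq_mul, RingHom.id_apply,
          Finset.mul_sum]
        exact Finset.sum_congr rfl fun e _ => by ring }
  map_add' a b := by
    ext c
    simp [mul_add, add_mul, Finset.sum_add_distrib]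
  map_smul' r a := by
    ext c
    simp only [LinearMap.coe_mk, AddHom.coe_mk, Pi.smul_apply, smul_eq_mul,
      RingHom.id_apply, LinearMap.smul_apply, Finset.mul_sum]
    exact Finset.sum_congr rfl fun e _ => by ring

lemma pairDual_surjective (u0 : E → ℚ) (hu : ∀ e, u0 e ≠ 0)
    (K : Submodule ℚ (E → ℚ)) : Function.Surjective (pairDual u0 K) := by
  intro ψ
  obtain ⟨ψ', hψ'⟩ := Subspace.dualRestrict_surjective (W := K) ψ
  classical
  refine ⟨fun e => ψ' (Pi.single e 1) / u0 e, ?_⟩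
  ext c
  show ∑ e : E, (c : E → ℚ) e * (ψ' (Pi.single e 1) / u0 e) * u0 e = ψ c
  rw [← hψ', Submodule.dualRestrict_apply]
  rw [LinearMap.pi_apply_eq_sum_univ ψ' (c : E → ℚ)]
  refine Finset.sum_congr rfl fun e _ => ?_
  have hs : (fun j => if e = j then (1 : ℚ) else 0) = Pi.single e 1 := by
    funext j; simp [Pi.single_apply, eq_comm]
  rw [hs, mul_assoc, div_mul_cancel₀ _ (hu e), smul_eq_mul]

end Aux


/-- Proposition 2.7, the `g = 0` and `n = 1` cases.
(1) If `g = 0` then `W` is all of `E → ℚ` (so `codim W = 0 = n·g`);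
(2) if `n = 1` and every edge direction is nonzero, then `codim W = g`.
In both cases the corresponding tropical curves are non-superabundant. -/
theorem statement_4 {V E : Type*} [Fintype V] [Fintype E] [Nonempty V]
    (s t : E → V) (hconn : GraphConnected s t) {n : ℕ} (hn : 1 ≤ n)
    (u : E → Fin n → ℚ) (g : ℕ) (hg : g + Fintype.card V = Fintype.card E + 1) :
    (g = 0 → Wsub s t u = ⊤) ∧
    (n = 1 → (∀ e, u e ≠ 0) →
      Fintype.card E - Module.finrank ℚ (Wsub s t u) = g) := by
  classical
  set K := LinearMap.ker (boundaryMap s t) with hK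
  have hrk : Module.finrank ℚ K = g := finrank_ker_boundary s t hconn g hg
  constructor
  · intro hg0
    have hbot : K = ⊥ := by
      rw [← Submodule.finrank_eq_zero (S := K)]
      omega
    rw [Wsub, ← hK, hbot]
    rw [eq_top_iff]
    intro a _
    rw [Submodule.mem_iInf]
    intro c
    rw [Submodule.mem_iInf]
    intro hc
    rw [Submodule.mem_bot] at hc
    subst hc
    rw [LinearMap.mem_ker]
    show ∑ e : E, ((0 : E → ℚ) e * a e) • u e = 0
    simp
  · intro hn1 hu
    subst hn1
    set u0 : E → ℚ := fun e => u e 0 with hu0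
    have hu0ne : ∀ e, u0 e ≠ 0 := by
      intro e he
      apply hu e
      funext i
      have : i = 0 := Subsingleton.elim i 0
      rw [this]; exact he
    have hW : Wsub s t u = LinearMap.ker (pairDual u0 K) := by
      ext a
      rw [Wsub, ← hK, Submodule.mem_iInf, LinearMap.mem_ker]
      constructor
      · intro h
        ext c
        have hc := h (c : E → ℚ)
        rw [Submodule.mem_iInf] at hc
        have h0 := hc c.2
        rw [LinearMap.mem_ker] at h0
        have h1 := congrFun h0 0
        show ∑ e : E, (c : E → ℚ) e * a e * u0 e = 0
        simpa [cyclePairing, Finset.sum_apply] using h1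
      · intro h c
        rw [Submodule.mem_iInf]
        intro hc
        rw [LinearMap.mem_ker]
        have h0 := congrArg (fun ψ => ψ (⟨c, hc⟩ : K)) h
        have h0' : ∑ e : E, c e * a e * u0 e = 0 := by simpa [pairDual] using h0
        funext i
        have : i = 0 := Subsingleton.elim i 0
        subst this
        simpa [cyclePairing, Finset.sum_apply] using h0'
    have h2 : Module.finrank ℚ (LinearMap.range (pairDual u0 K))
        + Module.finrank ℚ (LinearMap.ker (pairDual u0 K)) = Fintype.card E := by
      rw [LinearMap.finrank_range_add_finrank_ker, Module.finrank_fintype_fun_eq_card]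
    rw [LinearMap.range_eq_top.mpr (pairDual_surjective u0 hu0ne K), finrank_top,
      Subspace.dual_finrank_eq, hrk] at h2
    rw [hW]
    omega
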